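/- arXiv:0904.3219 — 3 statements merged into one kernel-verified Lean document; each statement's English description precedes it below -/
import Mathlib

section
/- Let m ≥ 1, let g be a constant invertible symmetric m×m complex matrix, let U ⊆ ℝ be open, and let K : U → Mat_m(ℂ) be differentiable with K̄(s)·K(s) = 1 for all s ∈ U. Define h(s) to be the entrywise complex conjugate of K(s)·g. Then h(s) is invertible for every s ∈ U, h is differentiable on U, and for every t ∈ U one has K′(t) + K(t)·( h′(t)·h(t)⁻¹ ) = 0, i.e. the 'connection matrix' ω(t) := h′(t)·h(t)⁻¹ equals −K(t)⁻¹·K′(t). -/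
/-!
Differentiating `K̄ K = 1` gives `K̄′ K = -K̄ K′`. Since `h = K̄ ḡ` and `ḡ` is constant,
`h′ h⁻¹ = K̄′ ḡ ḡ⁻¹ K̄⁻¹ = K̄′ K`, and `K̄⁻¹ = K`, `K⁻¹ = K̄` turn this into `-K⁻¹ K′`.
-/

open Matrix Filter Topology

section EntrywiseDeriv

variable {𝕜 𝔸 n p q : Type*} [NontriviallyNormedField 𝕜] [NormedCommRing 𝔸] [NormedAlgebra 𝕜 𝔸]

/-- Matrices carry no global norm in Mathlib, so derivatives of matrix-valued curves are taken
entrywise, as in the hypotheses of `stmt2`. -/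
def Matrix.HasEntrywiseDerivAt (F : 𝕜 → Matrix n p 𝔸) (F' : Matrix n p 𝔸) (t : 𝕜) : Prop :=
  ∀ i j, HasDerivAt (fun s => F s i j) (F' i j) t

namespace Matrix.HasEntrywiseDerivAt

variable {A : 𝕜 → Matrix n p 𝔸} {A' : Matrix n p 𝔸} {t : 𝕜}

theorem const (C : Matrix n p 𝔸) (t : 𝕜) : HasEntrywiseDerivAt (fun _ => C) 0 t :=
  fun i j => hasDerivAt_const t (C i j)

theorem mul [Fintype p] {B : 𝕜 → Matrix p q 𝔸} {B' : Matrix p q 𝔸}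
    (hA : HasEntrywiseDerivAt A A' t) (hB : HasEntrywiseDerivAt B B' t) :
    HasEntrywiseDerivAt (fun s => A s * B s) (A' * B t + A t * B') t := by
  intro i j
  simp only [Matrix.mul_apply, Matrix.add_apply, ← Finset.sum_add_distrib]
  exact HasDerivAt.fun_sum fun k _ => (hA i k).mul (hB k j)

theorem mul_const [Fintype p] (hA : HasEntrywiseDerivAt A A' t) (C : Matrix p q 𝔸) :
    HasEntrywiseDerivAt (fun s => A s * C) (A' * C) t := by
  simpa using hA.mul (const C t)

theorem map_star [StarRing 𝕜] [TrivialStar 𝕜] [StarRing 𝔸] [StarModule 𝕜 𝔸] [ContinuousStar 𝔸]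
    (hA : HasEntrywiseDerivAt A A' t) :
    HasEntrywiseDerivAt (fun s => (A s).map (starRingEnd 𝔸)) (A'.map (starRingEnd 𝔸)) t :=
  fun i j => (hA i j).star

theorem eq_zero_of_eventuallyEq_const (hA : HasEntrywiseDerivAt A A' t) {C : Matrix n p 𝔸}
    (hC : A =ᶠ[𝓝 t] fun _ => C) : A' = 0 := by
  ext i j
  exact (hA i j).unique <| (hasDerivAt_const t (C i j)).congr_of_eventuallyEq <|
    hC.mono fun s hs => congrFun (congrFun hs i) j

end Matrix.HasEntrywiseDerivAt

theorem Matrix.map_star_deriv_mul_eq_neg [StarRing 𝕜] [TrivialStar 𝕜] [StarRing 𝔸]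
    [StarModule 𝕜 𝔸] [ContinuousStar 𝔸] [Fintype n] [DecidableEq n] {K : 𝕜 → Matrix n n 𝔸}
    {K' : Matrix n n 𝔸} {t : 𝕜} (hK : HasEntrywiseDerivAt K K' t)
    (hKK : ∀ᶠ s in 𝓝 t, (K s).map (starRingEnd 𝔸) * K s = 1) :
    K'.map (starRingEnd 𝔸) * K t = -((K t).map (starRingEnd 𝔸) * K') :=
  eq_neg_of_add_eq_zero_left <| (hK.map_star.mul hK).eq_zero_of_eventuallyEq_const hKK

end EntrywiseDeriv

theorem Matrix.mul_mul_inv_mul_cancel_right {n R : Type*} [Fintype n] [DecidableEq n] [CommRing R]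
    (X Y : Matrix n n R) {G : Matrix n n R} (hG : IsUnit G.det) :
    X * G * (Y * G)⁻¹ = X * Y⁻¹ := by
  rw [mul_inv_rev, ← mul_assoc, mul_nonsing_inv_cancel_right _ _ hG]

theorem stmt2_general {m : ℕ}
    (g : Matrix (Fin m) (Fin m) ℂ) (hg_inv : IsUnit g)
    (U : Set ℝ) (hU : IsOpen U)
    (K K' : ℝ → Matrix (Fin m) (Fin m) ℂ)
    (hKderiv : ∀ s ∈ U, ∀ i j, HasDerivAt (fun t => K t i j) (K' s i j) s)
    (hKinv : ∀ s ∈ U, (K s).map (starRingEnd ℂ) * K s = 1)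
    (h : ℝ → Matrix (Fin m) (Fin m) ℂ)
    (hh : ∀ s, h s = (K s * g).map (starRingEnd ℂ)) :
    ∀ t ∈ U, IsUnit (h t) ∧
      (∀ i j, HasDerivAt (fun s => h s i j) (((K' t * g).map (starRingEnd ℂ)) i j) t) ∧
      K' t + K t * (((K' t * g).map (starRingEnd ℂ)) * (h t)⁻¹) = 0 ∧
      ((K' t * g).map (starRingEnd ℂ)) * (h t)⁻¹ = -((K t)⁻¹ * K' t) := by
  intro t ht
  have hK : HasEntrywiseDerivAt K (K' t) t := hKderiv t ht
  have hKK : (K t).map (starRingEnd ℂ) * K t = 1 := hKinv t ht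
  have hg_conj : IsUnit (g.map (starRingEnd ℂ)) := hg_inv.map (starRingEnd ℂ).mapMatrix
  have hht : h t = (K t).map (starRingEnd ℂ) * g.map (starRingEnd ℂ) := by rw [hh, Matrix.map_mul]
  have hω : (K' t * g).map (starRingEnd ℂ) * (h t)⁻¹ = -((K t)⁻¹ * K' t) := by
    rw [Matrix.map_mul, hht,
      mul_mul_inv_mul_cancel_right _ _ ((isUnit_iff_isUnit_det _).mp hg_conj),
      inv_eq_right_inv hKK, inv_eq_left_inv hKK]
    exact map_star_deriv_mul_eq_neg hK (eventually_of_mem (hU.mem_nhds ht) hKinv)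
  refine ⟨hht ▸ (IsUnit.of_mul_eq_one _ hKK).mul hg_conj, ?_, ?_, hω⟩
  · rw [show h = fun s => (K s * g).map (starRingEnd ℂ) from funext hh]
    exact (hK.mul_const g).map_star
  · rw [hω, inv_eq_left_inv hKK, mul_neg, ← mul_assoc, mul_eq_one_comm.mp hKK, one_mul,
      add_neg_cancel]

theorem stmt2 {m : ℕ} (hm : 1 ≤ m)
    (g : Matrix (Fin m) (Fin m) ℂ) (hg_inv : IsUnit g) (hg_symm : gᵀ = g)
    (U : Set ℝ) (hU : IsOpen U)
    (K K' : ℝ → Matrix (Fin m) (Fin m) ℂ)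
    (hKderiv : ∀ s ∈ U, ∀ i j, HasDerivAt (fun t => K t i j) (K' s i j) s)
    (hKinv : ∀ s ∈ U, (K s).map (starRingEnd ℂ) * K s = 1)
    (h : ℝ → Matrix (Fin m) (Fin m) ℂ)
    (hh : ∀ s, h s = (K s * g).map (starRingEnd ℂ)) :
    ∀ t ∈ U, IsUnit (h t) ∧
      (∀ i j, HasDerivAt (fun s => h s i j) (((K' t * g).map (starRingEnd ℂ)) i j) t) ∧
      K' t + K t * (((K' t * g).map (starRingEnd ℂ)) * (h t)⁻¹) = 0 ∧
      ((K' t * g).map (starRingEnd ℂ)) * (h t)⁻¹ = -((K t)⁻¹ * K' t) :=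
  stmt2_general g hg_inv U hU K K' hKderiv hKinv h hh
end

section
/- Let m ≥ 3 and for each γ ∈ {1,…,m} let W(γ) be an m×m complex matrix. Then the following condition (★) holds: for all α, β, γ, l ∈ {1,…,m}, −δ_{βγ}·W(α)_{βl} + δ_{lβ}·W(α)_{γβ} = −δ_{αγ}·W(β)_{αl} + δ_{lα}·W(β)_{γα}, if and only if both: (i) W(γ)_{αβ} = 0 whenever α, β, γ are pairwise distinct, and (ii) W(α)_{αβ} + W(β)_{αβ} = 0 whenever α ≠ β. -/
/-!
Statement 4 (Lemma `canoDphi` of the paper, m ≥ 3, in algebraic form):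
For matrices W(γ), the condition
(★): ∀ α β γ l, −δ_{βγ}·W(α)_{βl} + δ_{lβ}·W(α)_{γβ} = −δ_{αγ}·W(β)_{αl} + δ_{lα}·W(β)_{γα}
holds iff (i) W(γ)_{αβ} = 0 whenever α, β, γ are pairwise distinct, and
(ii) W(α)_{αβ} + W(β)_{αβ} = 0 whenever α ≠ β.
-/

theorem stmt4 {m : ℕ} (hm : 3 ≤ m) (W : Fin m → Matrix (Fin m) (Fin m) ℂ) :
    (∀ α β γ l : Fin m,
        -(if β = γ then (1 : ℂ) else 0) * W α β l + (if l = β then (1 : ℂ) else 0) * W α γ β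
          = -(if α = γ then (1 : ℂ) else 0) * W β α l + (if l = α then (1 : ℂ) else 0) * W β γ α)
      ↔ ((∀ α β γ : Fin m, α ≠ β → β ≠ γ → α ≠ γ → W γ α β = 0) ∧
         (∀ α β : Fin m, α ≠ β → W α α β + W β α β = 0)) := by
  constructor
  · intro h
    constructor
    · intro α β γ hab hbc hac
      have := h γ α α β
      simp [hab.symm, Ne.symm hac, hbc, hbc.symm, neg_eq_zero] at this
      exact this
    · intro α β hab
      have := h β α α β
      simp [hab.symm, Ne.symm hab] at this
      linear_combination -this
  · rintro ⟨h1, h2⟩ α β γ l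
    have h2a : ∀ a b : Fin m, a ≠ b → W a a b = -W b a b := fun a b hh => by
      linear_combination h2 a b hh
    have h2b : ∀ a b : Fin m, a ≠ b → -W a a b = W b a b := fun a b hh => by
      linear_combination -h2 a b hh
    by_cases hab : α = β
    · subst hab; rfl
    by_cases hbc : β = γ <;> by_cases hlb : l = β <;> by_cases hac : α = γ <;>
      by_cases hla : l = α <;> subst_vars <;> simp_all <;>
      first
        | exact h1 _ _ _ (by tauto) (by tauto) (by tauto)
        | exact (h1 _ _ _ (by tauto) (by tauto) (by tauto)).symm
        | exact h2a _ _ (by tauto)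
        | exact (h2a _ _ (by tauto)).symm
        | exact h2b _ _ (by tauto)
        | exact (h2b _ _ (by tauto)).symm
end

section
/- Let m ≥ 3, let g be an invertible symmetric m×m complex matrix, let C(1),…,C(m) be m×m complex matrices such that the first row of C(j) is the j-th standard basis vector (C(j)_{1q} = δ_{jq} for all q), and let W(1),…,W(m) be diagonal m×m complex matrices satisfying: (a) C(j)·W(k) − W(k)·C(j) = C(k)·W(j) − W(j)·C(k) for all j, k, and (b) W(k)·g + g·W(k)ᵀ = 0 for all k. Then W(k) = 0 for all k. -/
/-!
Write `W k = diagonal d`. Reading `[C j, W k] = [C k, W j]` in the first row, column `j ≠ k`,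
gives `d j = d 0`: the first row of `C j` is `e_j`, that of `C k` vanishes at `j`. The
skew-symmetry `W k g + g (W k)ᵀ = 0` says `(d i + d j) g i j = 0`. If the common value
`c = d 0` were nonzero, `g` would vanish off row and column `k`, so two rows of `g` outside `k`
would both be multiples of `e_k`, and `g` would be singular. Hence `c = 0`, and a nonzero entry
in row `k` of `g` then forces `d k = 0`.
-/

open Matrix

namespace Matrix

variable {n K : Type*} [Fintype n] [DecidableEq n]

section CommRing

variable [CommRing K]

lemma commutator_diagonal_apply (C : Matrix n n K) (d : n → K) (i j : n) :
    (C * diagonal d - diagonal d * C) i j = C i j * (d j - d i) := by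
  simp only [sub_apply, mul_diagonal, diagonal_mul]
  ring

lemma diagonal_mul_add_mul_transpose_diagonal_apply (d : n → K) (g : Matrix n n K) (i j : n) :
    (diagonal d * g + g * (diagonal d)ᵀ) i j = (d i + d j) * g i j := by
  simp only [add_apply, diagonal_transpose, mul_diagonal, diagonal_mul]
  ring

lemma exists_apply_ne_zero_of_isUnit [Nontrivial K] {g : Matrix n n K} (hg : IsUnit g) (i : n) :
    ∃ j, g i j ≠ 0 := by
  by_contra! h
  exact ((isUnit_iff_isUnit_det g).mp hg).ne_zero (det_eq_zero_of_row_eq_zero i h)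

end CommRing

variable [Field K]

lemma not_isUnit_of_rows_eq_zero_off {g : Matrix n n K} {a b k : n} (hab : a ≠ b)
    (ha : ∀ j ≠ k, g a j = 0) (hb : ∀ j ≠ k, g b j = 0) : ¬IsUnit g := by
  rw [isUnit_iff_isUnit_det, isUnit_iff_ne_zero, not_not]
  by_cases hak : g a k = 0
  · exact det_eq_zero_of_row_eq_zero a fun j ↦ by
      rcases eq_or_ne j k with rfl | hj
      exacts [hak, ha j hj]
  · rw [← det_updateRow_add_smul_self g hab.symm (-(g b k / g a k))]
    refine det_eq_zero_of_row_eq_zero b fun j ↦ ?_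
    rw [updateRow_self, Pi.add_apply, Pi.smul_apply, smul_eq_mul]
    rcases eq_or_ne j k with rfl | hj
    · field_simp
      ring
    · rw [ha j hj, hb j hj, mul_zero, add_zero]

lemma eq_zero_of_isUnit_of_add_mul_apply_eq_zero [NeZero (2 : K)] {g : Matrix n n K}
    (hg : IsUnit g) (hn : 2 < Fintype.card n) {d : n → K} {k : n} {c : K}
    (hd : ∀ j ≠ k, d j = c) (hdg : ∀ i j, (d i + d j) * g i j = 0) : d = 0 := by
  have hc : c = 0 := by
    by_contra hc
    have hoff : ∀ i ≠ k, ∀ j ≠ k, g i j = 0 := fun i hi j hj ↦ by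
      simpa [hd i hi, hd j hj, ← two_mul, hc, two_ne_zero] using hdg i j
    have hcard : 1 < ({k}ᶜ : Finset n).card := by
      rw [Finset.card_compl, Finset.card_singleton]
      omega
    obtain ⟨a, ha, b, hb, hab⟩ := Finset.one_lt_card.mp hcard
    rw [Finset.mem_compl, Finset.mem_singleton] at ha hb
    exact not_isUnit_of_rows_eq_zero_off hab (hoff a ha) (hoff b hb) hg
  have hdk : d k = 0 := by
    obtain ⟨j, hj⟩ := exists_apply_ne_zero_of_isUnit hg k
    have hsum : d k + d j = 0 := (mul_eq_zero.mp (hdg k j)).resolve_right hj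
    rcases eq_or_ne j k with rfl | hjk
    · simpa [← two_mul, two_ne_zero] using hsum
    · simpa [hd j hjk, hc] using hsum
  funext j
  rcases eq_or_ne j k with rfl | hjk
  exacts [hdk, (hd j hjk).trans hc]

end Matrix

theorem stmt15 {m : ℕ} (hm : 3 ≤ m)
    (g : Matrix (Fin m) (Fin m) ℂ) (hg_inv : IsUnit g)
    (C W : Fin m → Matrix (Fin m) (Fin m) ℂ)
    (hC : ∀ j q : Fin m, C j ⟨0, by omega⟩ q = if j = q then 1 else 0)
    (hW : ∀ k, (W k).IsDiag)
    (ha : ∀ j k, C j * W k - W k * C j = C k * W j - W j * C k)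
    (hb : ∀ k, W k * g + g * (W k)ᵀ = 0) :
    ∀ k, W k = 0 := by
  intro k
  set z : Fin m := ⟨0, by omega⟩
  have hWd : ∀ k, W k = diagonal (W k).diag := fun k ↦ (hW k).diagonal_diag.symm
  have hconst : ∀ j ≠ k, (W k).diag j = (W k).diag z := fun j hjk ↦ by
    have h := congrFun₂ (ha j k) z j
    rw [hWd k, hWd j, commutator_diagonal_apply, commutator_diagonal_apply, hC, hC,
      if_pos rfl, if_neg hjk.symm, one_mul, zero_mul, sub_eq_zero] at h
    exact h
  have hskew : ∀ i j, ((W k).diag i + (W k).diag j) * g i j = 0 := fun i j ↦ by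
    rw [← diagonal_mul_add_mul_transpose_diagonal_apply, ← hWd k, hb k, Matrix.zero_apply]
  rw [hWd k, eq_zero_of_isUnit_of_add_mul_apply_eq_zero hg_inv (by rw [Fintype.card_fin]; omega) hconst hskew,
    diagonal_zero']
end
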